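/- Fix w* > 0 and let R(w) = (σ(w) - σ(w*))/(w - w*) for w ≠ w*, where σ is the sigmoid. Then: (a) R is strictly increasing on (-∞, -w*); (b) for every w with -w* < w < w*, R(w) > σ'(w*); (c) for every w > w*, R(w) < σ'(w*); (d) for every w > w* > 0, σ'(w) < σ'(2w* - w). -/

import Mathlib

/-!
The derivative `σ' = σ (1 - σ)` is even and strictly decreasing on `[0, ∞)`, since `σ ≥ 1/2`
there. Parts (b)–(d) follow: by the mean value theorem `R w = σ' c` for some `c` strictly between
`w` and `w*`, and in (b) `|c| < w*` while in (c) `c > w*`.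

For (a), the derivative of `R` at `w` is `G w / (w - w*)²` with
`G w = σ' w (w - w*) - (σ w - σ w*) = tangentGap σ w* w`. On `(-∞, -w*]` the sigmoid is convex and `w ≤ w*`,
which makes `G` antitone there, so `G w ≥ G (-w*) = σ w* - σ (-w*) - 2 w* σ' w*`.
The last quantity is positive because it reduces to `w* < sinh w*`.
-/

noncomputable def sigmoid (w : ℝ) : ℝ := 1 / (1 + Real.exp (-w))

lemma sigmoid_eq_real_sigmoid : sigmoid = Real.sigmoid :=
  funext fun _ => one_div _

open Set

/-- `f a` minus the value at `a` of the tangent line to `f` at `x`. -/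
noncomputable def tangentGap (f : ℝ → ℝ) (a x : ℝ) : ℝ :=
  deriv f x * (x - a) - (f x - f a)

lemma hasDerivAt_secant {f : ℝ → ℝ} {a x : ℝ} (hf : DifferentiableAt ℝ f x) (hx : x ≠ a) :
    HasDerivAt (fun y => (f y - f a) / (y - a)) (tangentGap f a x / (x - a) ^ 2) x := by
  simpa [tangentGap] using
    (hf.hasDerivAt.sub_const (f a)).fun_div ((hasDerivAt_id x).sub_const a) (sub_ne_zero.2 hx)

lemma strictMonoOn_secant {f : ℝ → ℝ} {a : ℝ} {s : Set ℝ} (hs : Convex ℝ s) (ha : a ∉ s)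
    (hf : Differentiable ℝ f) (hgap : ∀ x ∈ interior s, 0 < tangentGap f a x) :
    StrictMonoOn (fun x => (f x - f a) / (x - a)) s := by
  have hne : ∀ x ∈ s, x ≠ a := fun x hx h => ha (h ▸ hx)
  refine strictMonoOn_of_deriv_pos hs
    (fun x hx => (hasDerivAt_secant (hf x) (hne x hx)).continuousAt.continuousWithinAt)
    fun x hx => ?_
  have hxa : x ≠ a := hne x (interior_subset hx)
  rw [(hasDerivAt_secant (hf x) hxa).deriv]
  exact div_pos (hgap x hx) (sq_pos_of_ne_zero (sub_ne_zero.2 hxa))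

lemma antitoneOn_tangentGap {f : ℝ → ℝ} {a : ℝ} {s : Set ℝ} (hs : s.OrdConnected)
    (hf : Differentiable ℝ f) (hf' : MonotoneOn (deriv f) s) (hsa : ∀ x ∈ s, x ≤ a) :
    AntitoneOn (tangentGap f a) s := by
  intro v hv w hw hvw
  rcases hvw.eq_or_lt with rfl | hlt
  · rfl
  obtain ⟨c, hc, hc_eq⟩ :=
    exists_deriv_eq_slope f hlt hf.continuous.continuousOn hf.differentiableOn
  have hv_le_c : deriv f v ≤ deriv f c := hf' hv (hs.out hv hw (Ioo_subset_Icc_self hc)) hc.1.le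
  have htangent : deriv f v * (w - v) ≤ f w - f v := by
    rwa [hc_eq, le_div_iff₀ (sub_pos.2 hlt)] at hv_le_c
  have hmono := mul_nonneg (sub_nonneg.2 (hf' hv hw hvw)) (sub_nonneg.2 (hsa w hw))
  unfold tangentGap
  nlinarith

namespace Real

lemma deriv_sigmoid_neg (x : ℝ) : deriv sigmoid (-x) = deriv sigmoid x := by
  simp only [deriv_sigmoid, sigmoid_neg]
  ring

lemma strictAntiOn_deriv_sigmoid : StrictAntiOn (deriv sigmoid) (Ici 0) := by
  intro x hx y _ hxy
  have hx_half : 2⁻¹ ≤ sigmoid x := sigmoid_zero ▸ sigmoid_le hx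
  have hxy' := sigmoid_lt hxy
  simp only [deriv_sigmoid]
  nlinarith

lemma deriv_sigmoid_lt_of_abs_lt {u v : ℝ} (h : |u| < v) : deriv sigmoid v < deriv sigmoid u := by
  have habs : deriv sigmoid |u| = deriv sigmoid u := by
    rcases abs_choice u with hu | hu <;> rw [hu]
    exact deriv_sigmoid_neg u
  rw [← habs]
  exact strictAntiOn_deriv_sigmoid (abs_nonneg u) ((abs_nonneg u).trans h.le) h

lemma monotoneOn_deriv_sigmoid : MonotoneOn (deriv sigmoid) (Iic 0) := by
  intro x hx y hy hxy
  rw [← deriv_sigmoid_neg x, ← deriv_sigmoid_neg y]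
  exact strictAntiOn_deriv_sigmoid.antitoneOn (mem_Ici.2 (neg_nonneg.2 hy))
    (mem_Ici.2 (neg_nonneg.2 hx)) (neg_le_neg hxy)

lemma two_mul_mul_deriv_sigmoid_lt_sigmoid_sub_sigmoid_neg {a : ℝ} (ha : 0 < a) :
    2 * a * deriv sigmoid a < sigmoid a - sigmoid (-a) := by
  have hsinh := self_lt_sinh_iff.2 ha
  rw [sinh_eq] at hsinh
  have hexp : exp a * exp (-a) = 1 := by rw [← exp_add, add_neg_cancel, exp_zero]
  have hexp_pos := exp_pos (-a)
  simp only [deriv_sigmoid, sigmoid_def, neg_neg]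
  rw [← sub_pos]
  field_simp
  nlinarith

lemma tangentGap_sigmoid_pos {a x : ℝ} (ha : 0 < a) (hx : x ≤ -a) :
    0 < tangentGap sigmoid a x := by
  have hgap : 0 < tangentGap sigmoid a (-a) := by
    have := two_mul_mul_deriv_sigmoid_lt_sigmoid_sub_sigmoid_neg ha
    rw [tangentGap, deriv_sigmoid_neg]
    linarith
  refine hgap.trans_le (antitoneOn_tangentGap ordConnected_Iic differentiable_sigmoid
    (monotoneOn_deriv_sigmoid.mono (Iic_subset_Iic.2 (by linarith)))
    (fun y hy => by linarith [mem_Iic.1 hy]) hx (mem_Iic.2 le_rfl) hx)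

end Real

theorem secant_slope_properties
    (wstar : ℝ) (hwstar : 0 < wstar)
    (R : ℝ → ℝ)
    (hR : ∀ w, w ≠ wstar → R w = (sigmoid w - sigmoid wstar) / (w - wstar)) :
    StrictMonoOn R (Set.Iio (-wstar)) ∧
    (∀ w, -wstar < w → w < wstar → deriv sigmoid wstar < R w) ∧
    (∀ w, wstar < w → R w < deriv sigmoid wstar) ∧
    (∀ w, wstar < w → deriv sigmoid w < deriv sigmoid (2 * wstar - w)) := by
  rw [sigmoid_eq_real_sigmoid] at hR ⊢
  refine ⟨?_, fun w hw hw' => ?_, fun w hw => ?_, fun _ hw =>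
    Real.deriv_sigmoid_lt_of_abs_lt (abs_lt.2 ⟨by linarith, by linarith⟩)⟩
  · have hgap : ∀ x ∈ interior (Iio (-wstar)), 0 < tangentGap Real.sigmoid wstar x := by
      rw [interior_Iio]
      exact fun x hx => Real.tangentGap_sigmoid_pos hwstar hx.le
    exact (strictMonoOn_secant (convex_Iio _) (notMem_Iio.2 (by linarith)) differentiable_sigmoid
      hgap).congr fun w hw => (hR w (hw.trans (by linarith : -wstar < wstar)).ne).symm
  · obtain ⟨c, hc, hc_eq⟩ := exists_deriv_eq_slope Real.sigmoid hw'
      continuous_sigmoid.continuousOn differentiable_sigmoid.differentiableOn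
    rw [hR w hw'.ne, ← neg_sub, ← neg_sub wstar, neg_div_neg_eq, ← hc_eq]
    exact Real.deriv_sigmoid_lt_of_abs_lt (abs_lt.2 ⟨by linarith [hc.1], hc.2⟩)
  · obtain ⟨c, hc, hc_eq⟩ := exists_deriv_eq_slope Real.sigmoid hw
      continuous_sigmoid.continuousOn differentiable_sigmoid.differentiableOn
    rw [hR w hw.ne', ← hc_eq]
    exact Real.deriv_sigmoid_lt_of_abs_lt ((abs_of_pos hwstar).symm ▸ hc.1)
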